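/- For |q| < 1 and |z| < 1, we have 1/(z;q)_∞ = Σ_{j≥0} z^j/(q;q)_j, where (z;q)_∞ = Π_{l≥0}(1 - z q^l). -/

import Mathlib

/-!
Write `e(w) = ∑ w ^ j / (q;q)_j` (Euler's `q`-exponential), which converges for `‖w‖ < 1` by the
ratio test. Comparing coefficients gives the functional equation `(1 - w) e(w) = e(q w)`, hence
`(z;q)_n e(z) = e(q ^ n z)`. As `n → ∞` the left side tends to `(z;q)_∞ e(z)`, and the right side
tends to `e(0) = 1` because `e` is continuous on closed discs of radius `< 1` (Weierstrass M-test).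
-/

noncomputable def qPoch (z q : ℂ) (n : ℕ) : ℂ := ∏ i ∈ Finset.range n, (1 - z * q ^ i)

open Filter Topology

lemma one_sub_ne_zero_of_norm_lt_one {x : ℂ} (hx : ‖x‖ < 1) : 1 - x ≠ 0 := by
  intro h
  rw [sub_eq_zero] at h
  simp [← h] at hx

lemma norm_pow_mul_le {q : ℂ} (hq : ‖q‖ ≤ 1) (n : ℕ) (z : ℂ) : ‖q ^ n * z‖ ≤ ‖z‖ := by
  rw [norm_mul, norm_pow]
  exact mul_le_of_le_one_left (norm_nonneg _) (pow_le_one₀ (norm_nonneg _) hq)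

lemma one_sub_pow_succ_ne_zero {q : ℂ} (hq : ‖q‖ < 1) (n : ℕ) : 1 - q ^ (n + 1) ≠ 0 :=
  one_sub_ne_zero_of_norm_lt_one <| by
    rw [norm_pow]
    exact pow_lt_one₀ (norm_nonneg _) hq n.succ_ne_zero

lemma qPoch_zero (z q : ℂ) : qPoch z q 0 = 1 := Finset.prod_range_zero _

lemma qPoch_succ (z q : ℂ) (n : ℕ) : qPoch z q (n + 1) = qPoch z q n * (1 - z * q ^ n) :=
  Finset.prod_range_succ _ n

lemma qPoch_ne_zero {z q : ℂ} (hz : ‖z‖ < 1) (hq : ‖q‖ ≤ 1) (n : ℕ) : qPoch z q n ≠ 0 :=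
  Finset.prod_ne_zero_iff.mpr fun i _ ↦ one_sub_ne_zero_of_norm_lt_one <| by
    simpa only [mul_comm] using (norm_pow_mul_le hq i z).trans_lt hz

lemma multipliable_one_sub_mul_pow {q : ℂ} (hq : ‖q‖ < 1) (z : ℂ) :
    Multipliable fun l : ℕ ↦ 1 - z * q ^ l := by
  have hsum : Summable fun l : ℕ ↦ -(z * q ^ l) :=
    ((summable_geometric_of_norm_lt_one hq).mul_left z).neg
  simpa only [← sub_eq_add_neg] using Complex.multipliable_one_add_of_summable hsum

noncomputable def qExp (q w : ℂ) : ℂ := ∑' j : ℕ, w ^ j / qPoch q q j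

section qExp

variable {q : ℂ}

lemma qExp_zero (q : ℂ) : qExp q 0 = 1 := by
  rw [qExp, tsum_eq_single 0 fun j hj ↦ by simp [zero_pow hj]]
  simp [qPoch_zero]

lemma qExp_term_succ (hq : ‖q‖ < 1) (w : ℂ) (n : ℕ) :
    w ^ (n + 1) / qPoch q q (n + 1) = w ^ n / qPoch q q n * (w / (1 - q ^ (n + 1))) := by
  have hP := qPoch_ne_zero hq hq.le n
  have hf := one_sub_pow_succ_ne_zero hq n
  rw [qPoch_succ, ← pow_succ']
  field_simp
  ring

lemma summable_qExp (hq : ‖q‖ < 1) {w : ℂ} (hw : ‖w‖ < 1) :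
    Summable fun j : ℕ ↦ w ^ j / qPoch q q j := by
  rcases eq_or_ne w 0 with rfl | hw0
  · exact summable_of_ne_finset_zero (s := {0}) fun j hj ↦ by
      simp [zero_pow (Finset.notMem_singleton.mp hj)]
  refine summable_of_ratio_test_tendsto_lt_one hw
    (Eventually.of_forall fun n ↦ div_ne_zero (pow_ne_zero _ hw0) (qPoch_ne_zero hq hq.le n)) ?_
  have hratio : Tendsto (fun n : ℕ ↦ ‖w / (1 - q ^ (n + 1))‖) atTop (𝓝 ‖w‖) := by
    have hpow : Tendsto (fun n : ℕ ↦ 1 - q ^ (n + 1)) atTop (𝓝 1) := by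
      simpa using tendsto_const_nhds.sub
        ((tendsto_add_atTop_iff_nat 1).mpr (tendsto_pow_atTop_nhds_zero_of_norm_lt_one hq))
    simpa using (tendsto_const_nhds.div hpow one_ne_zero).norm
  refine hratio.congr fun n ↦ ?_
  rw [qExp_term_succ hq, norm_mul, mul_div_cancel_left₀ _
    (norm_ne_zero_iff.mpr (div_ne_zero (pow_ne_zero _ hw0) (qPoch_ne_zero hq hq.le n)))]

lemma one_sub_mul_qExp (hq : ‖q‖ < 1) {w : ℂ} (hw : ‖w‖ < 1) :
    (1 - w) * qExp q w = qExp q (q * w) := by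
  have hs := summable_qExp hq hw
  have hqw : ‖q * w‖ < 1 := by simpa using (norm_pow_mul_le hq.le 1 w).trans_lt hw
  have hs' := summable_qExp hq hqw
  -- the `j + 1`-st term of `e(w) - e(q w)` is `w` times the `j`-th term of `e(w)`
  have hdiff : qExp q w - qExp q (q * w) = w * qExp q w := by
    rw [qExp, qExp, ← hs.tsum_sub hs', (hs.sub hs').tsum_eq_zero_add, ← tsum_mul_left]
    simp only [pow_zero, sub_self, zero_add]
    congr 1
    funext j
    have hP := qPoch_ne_zero hq hq.le j
    have hf := one_sub_pow_succ_ne_zero hq j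
    rw [mul_pow, ← sub_div, qPoch_succ, ← pow_succ']
    field_simp
    ring
  linear_combination hdiff

lemma qPoch_mul_qExp (hq : ‖q‖ < 1) {z : ℂ} (hz : ‖z‖ < 1) (n : ℕ) :
    qPoch z q n * qExp q z = qExp q (q ^ n * z) := by
  induction n with
  | zero => simp [qPoch_zero]
  | succ n ih =>
    rw [qPoch_succ, mul_right_comm, ih, mul_comm (qExp q _), mul_comm z,
      one_sub_mul_qExp hq ((norm_pow_mul_le hq.le n z).trans_lt hz), ← mul_assoc, ← pow_succ']

lemma continuousOn_qExp (hq : ‖q‖ < 1) {z : ℂ} (hz : ‖z‖ < 1) :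
    ContinuousOn (qExp q) (Metric.closedBall 0 ‖z‖) := by
  refine continuousOn_tsum (fun j ↦ (continuous_pow j).div_const _ |>.continuousOn)
    (summable_qExp hq hz).norm fun j w hw ↦ ?_
  rw [mem_closedBall_zero_iff] at hw
  simp only [norm_div, norm_pow]
  gcongr

lemma tendsto_qExp_pow_mul (hq : ‖q‖ < 1) {z : ℂ} (hz : ‖z‖ < 1) :
    Tendsto (fun n : ℕ ↦ qExp q (q ^ n * z)) atTop (𝓝 1) := by
  have hzero : Tendsto (fun n : ℕ ↦ q ^ n * z) atTop (𝓝[Metric.closedBall 0 ‖z‖] 0) := by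
    refine tendsto_nhdsWithin_iff.mpr ⟨?_, Eventually.of_forall fun n ↦ ?_⟩
    · simpa using (tendsto_pow_atTop_nhds_zero_of_norm_lt_one hq).mul_const z
    · exact mem_closedBall_zero_iff.mpr (norm_pow_mul_le hq.le n z)
  have hcont := continuousOn_qExp hq hz 0 (Metric.mem_closedBall_self (norm_nonneg z))
  rw [ContinuousWithinAt, qExp_zero] at hcont
  exact hcont.comp hzero

end qExp

theorem stmt2 (q z : ℂ) (hq : ‖q‖ < 1) (hz : ‖z‖ < 1) :
    (∏' l : ℕ, (1 - z * q ^ l))⁻¹ = ∑' j : ℕ, z ^ j / qPoch q q j := by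
  have hprod : Tendsto (fun n ↦ qPoch z q n * qExp q z) atTop
      (𝓝 ((∏' l : ℕ, (1 - z * q ^ l)) * qExp q z)) :=
    (multipliable_one_sub_mul_pow hq z).hasProd.tendsto_prod_nat.mul_const _
  have hone : Tendsto (fun n ↦ qPoch z q n * qExp q z) atTop (𝓝 1) := by
    simpa only [qPoch_mul_qExp hq hz] using tendsto_qExp_pow_mul hq hz
  exact inv_eq_of_mul_eq_one_right (tendsto_nhds_unique hprod hone)
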